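/- Fix k ≥ 1. If the path graph P_n admits a burning sequence with exactly k sources whose burning is a burning homomorphism, then n ≤ k² + k + 1; moreover, the path graph P_{k²+k+1} admits such a burning sequence with exactly k sources. -/

import Mathlib

open SimpleGraph

/-- The path graph `P_n` with vertices `1, …, n` (represented by `Fin n`,
vertex `i+1` corresponds to index `i`) and edges `{i, i+1}`. -/
def pathG (n : ℕ) : SimpleGraph (Fin n) where
  Adj v w := v.val + 1 = w.val ∨ w.val + 1 = v.val
  symm := ⟨by intro v w h; tauto⟩
  loopless := ⟨by intro v h; rcases h with h | h <;> omega⟩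

/-- `(s 0, …, s (k-1))` is a burning sequence of `G` (written `1`-based in the paper:
`d(v_i, v_j) ≥ j - i + 1` for `i < j`, and every vertex `v` satisfies
`d(v_i, v) ≤ k + 1 - i` for some `i`). Distances are `ℕ∞`-valued. -/
def IsBurningSeq {V : Type*} (G : SimpleGraph V) {k : ℕ} (s : Fin k → V) : Prop :=
  1 ≤ k ∧
  (∀ i j : Fin k, i < j → ((j.val - i.val + 1 : ℕ) : ℕ∞) ≤ G.edist (s i) (s j)) ∧
  (∀ v : V, ∃ i : Fin k, G.edist (s i) v ≤ ((k - i.val : ℕ) : ℕ∞))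

/-- The burning time function `λ(v) = min_{1 ≤ i ≤ k} (i + d(v_i, v))`. -/
noncomputable def burnTime {V : Type*} (G : SimpleGraph V) {k : ℕ} (s : Fin k → V)
    (v : V) : ℕ :=
  (⨅ i : Fin k, ((i.val + 1 : ℕ) : ℕ∞) + G.edist (s i) v).toNat

/-- The end time `T = max_{v ∈ V} λ(v)` of a burning. -/
noncomputable def endTime {V : Type*} [Fintype V] (G : SimpleGraph V) {k : ℕ}
    (s : Fin k → V) : ℕ :=
  Finset.univ.sup fun v => burnTime G s v

/-!
If an edge `{u, w}` of `P_n` has `λ u < λ w` and source `i` realises `λ u = i + 1 + d(s i, u)`,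
then `d(s i, u) < d(s i, w)`, and `d(s i, u) < k - i` because `λ w ≤ k + 1`. On a path only
`2 (k - i)` edges are of this kind for a given `i`, so in a burning homomorphism, where every
edge has such an endpoint, `n - 1 ≤ ∑ i, 2 (k - i) = k² + k`.

Conversely, put the sources (indexed from `0`) at the centres of consecutive blocks of lengths
`2k, 2(k - 1), …, 2`. They cover `P_{k² + k + 1}`, and source `i` sits at a position of the
parity of `k + i`, so `λ v ≡ k + 1 + v (mod 2)` and adjacent vertices burn at different times.
-/

open Finset

def IsBurningHom {V : Type*} (G : SimpleGraph V) {k : ℕ} (s : Fin k → V) : Prop :=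
  ∀ v w : V, G.Adj v w → burnTime G s v ≠ burnTime G s w

section BurnTime

variable {V : Type*} {G : SimpleGraph V} {k : ℕ} (s : Fin k → V)

theorem burnTime_eq_iInf (hG : G.Preconnected) (v : V) :
    burnTime G s v = ⨅ i : Fin k, (i.val + 1 + G.dist (s i) v) := by
  have hcast (i : Fin k) : ((i.val + 1 : ℕ) : ℕ∞) + G.edist (s i) v =
      ((i.val + 1 + G.dist (s i) v : ℕ) : ℕ∞) := by
    rw [← (hG _ _).coe_dist_eq_edist]; push_cast; rfl
  simp only [burnTime, hcast, ENat.iInf_toNat]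

theorem burnTime_le (hG : G.Preconnected) (i : Fin k) (v : V) :
    burnTime G s v ≤ i.val + 1 + G.dist (s i) v :=
  burnTime_eq_iInf s hG v ▸ ciInf_le (OrderBot.bddBelow _) i

theorem exists_burnTime_eq (hG : G.Preconnected) (hk : 0 < k) (v : V) :
    ∃ i : Fin k, burnTime G s v = i.val + 1 + G.dist (s i) v := by
  have : Nonempty (Fin k) := ⟨⟨0, hk⟩⟩
  obtain ⟨i, hi⟩ := exists_eq_ciInf_of_finite (f := fun i : Fin k => i.val + 1 + G.dist (s i) v)
  exact ⟨i, by rw [burnTime_eq_iInf s hG, hi]⟩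

namespace IsBurningSeq

variable {s}

theorem burnTime_le_succ (hG : G.Preconnected) (hs : IsBurningSeq G s) (v : V) :
    burnTime G s v ≤ k + 1 := by
  obtain ⟨i, hi⟩ := hs.2.2 v
  rw [← (hG _ _).coe_dist_eq_edist, Nat.cast_le] at hi
  have := burnTime_le s hG i v
  omega

theorem exists_dist_lt_of_burnTime_lt (hG : G.Preconnected) (hs : IsBurningSeq G s) {u w : V}
    (h : burnTime G s u < burnTime G s w) :
    ∃ i : Fin k, G.dist (s i) u < G.dist (s i) w ∧ i.val + G.dist (s i) u < k := by
  obtain ⟨i, hi⟩ := exists_burnTime_eq s hG hs.1 u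
  have := burnTime_le s hG i w
  have := hs.burnTime_le_succ hG w
  exact ⟨i, by omega, by omega⟩

end IsBurningSeq

end BurnTime

theorem pathG_eq_pathGraph (n : ℕ) : pathG n = pathGraph n := by
  ext u v
  rw [pathGraph_adj]
  rfl

theorem pathGraph_natDist_le_length {n : ℕ} {u v : Fin n} (p : (pathGraph n).Walk u v) :
    Nat.dist u v ≤ p.length := by
  induction p with
  | nil => simp
  | cons h p ih =>
    rw [pathGraph_adj] at h
    rw [Walk.length_cons]
    unfold Nat.dist at *
    omega

theorem pathGraph_dist_le_of_add_eq {n d : ℕ} {u v : Fin n} (h : u.val + d = v.val) :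
    (pathGraph n).dist u v ≤ d := by
  induction d generalizing v with
  | zero => simp [Fin.ext (show u.val = v.val by omega)]
  | succ d ih =>
    let w : Fin n := ⟨v.val - 1, by omega⟩
    have hwv : (pathGraph n).Adj w v := pathGraph_adj.mpr (Or.inl (by simp [w]; omega))
    calc (pathGraph n).dist u v ≤ (pathGraph n).dist u w + (pathGraph n).dist w v :=
          hwv.reachable.dist_triangle_right u
      _ ≤ d + 1 := add_le_add (ih (by simp [w]; omega)) (dist_eq_one_iff_adj.mpr hwv).le

theorem pathGraph_dist {n : ℕ} (u v : Fin n) : (pathGraph n).dist u v = Nat.dist u v := by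
  refine le_antisymm ?_ ?_
  · rcases le_total u.val v.val with h | h
    · exact pathGraph_dist_le_of_add_eq (by unfold Nat.dist; omega)
    · rw [dist_comm, Nat.dist_comm]
      exact pathGraph_dist_le_of_add_eq (by unfold Nat.dist; omega)
  · obtain ⟨p, hp⟩ := (pathGraph_preconnected n u v).exists_walk_length_eq_dist
    exact hp ▸ pathGraph_natDist_le_length p

theorem pathG_preconnected (n : ℕ) : (pathG n).Preconnected :=
  pathG_eq_pathGraph n ▸ pathGraph_preconnected n

theorem pathG_dist {n : ℕ} (u v : Fin n) : (pathG n).dist u v = Nat.dist u v :=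
  pathG_eq_pathGraph n ▸ pathGraph_dist u v

theorem pathG_edist {n : ℕ} (u v : Fin n) : (pathG n).edist u v = Nat.dist u v := by
  rw [← (pathG_preconnected n u v).coe_dist_eq_edist, pathG_dist]

theorem two_mul_sum_range_sub (k : ℕ) : 2 * ∑ i ∈ range k, (k - i) = k ^ 2 + k := by
  induction k with
  | zero => simp
  | succ k ih =>
    rw [sum_range_succ', mul_add]
    simp only [Nat.add_sub_add_right, ih, Nat.sub_zero]
    ring

theorem exists_le_le_succ_of_le {α : Type*} [LinearOrder α] {f : ℕ → α} {a : α} {m : ℕ}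
    (h₀ : f 0 ≤ a) (hm : a ≤ f (m + 1)) : ∃ i ≤ m, f i ≤ a ∧ a ≤ f (i + 1) := by
  induction m with
  | zero => exact ⟨0, le_rfl, h₀, hm⟩
  | succ m ih =>
    by_cases ha : a ≤ f (m + 1)
    · obtain ⟨i, hi, hfi⟩ := ih ha
      exact ⟨i, by omega, hfi⟩
    · exact ⟨m + 1, le_rfl, le_of_not_ge ha, hm⟩

namespace IsBurningSeq

variable {n k : ℕ} {s : Fin k → Fin n}

theorem exists_mem_Ico_of_burnTime_ne (hs : IsBurningSeq (pathG n) s) {v : ℕ} (hv : v + 1 < n)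
    (hne : burnTime (pathG n) s ⟨v, by omega⟩ ≠ burnTime (pathG n) s ⟨v + 1, hv⟩) :
    ∃ i : Fin k, v ∈ Ico ((s i).val - (k - i)) ((s i).val + (k - i)) := by
  rcases hne.lt_or_gt with h | h <;>
  · obtain ⟨i, hd, hr⟩ := hs.exists_dist_lt_of_burnTime_lt (pathG_preconnected n) h
    simp only [pathG_dist, Nat.dist] at hd hr
    exact ⟨i, mem_Ico.mpr ⟨by omega, by omega⟩⟩

theorem le_sq_add_add_one_of_isBurningHom (hs : IsBurningSeq (pathG n) s)
    (hhom : IsBurningHom (pathG n) s) : n ≤ k ^ 2 + k + 1 := by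
  have hcover : range (n - 1) ⊆ univ.biUnion fun i : Fin k =>
      Ico ((s i).val - (k - i)) ((s i).val + (k - i)) := by
    intro v hv
    have hvn : v + 1 < n := by rw [mem_range] at hv; omega
    obtain ⟨i, hi⟩ := hs.exists_mem_Ico_of_burnTime_ne hvn (hhom _ _ (Or.inl rfl))
    exact mem_biUnion.mpr ⟨i, mem_univ i, hi⟩
  have hedges : n - 1 ≤ k ^ 2 + k := calc
    n - 1 = #(range (n - 1)) := (card_range _).symm
    _ ≤ _ := card_le_card hcover
    _ ≤ _ := card_biUnion_le
    _ ≤ ∑ i : Fin k, 2 * (k - i) := sum_le_sum fun i _ => by rw [Nat.card_Ico]; omega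
    _ = k ^ 2 + k := by
      rw [Fin.sum_univ_eq_sum_range (fun i => 2 * (k - i)), ← mul_sum, two_mul_sum_range_sub]
  omega

end IsBurningSeq

/-- `P_{k² + k + 1}` is cut into the blocks `[blockStart k i, blockStart k (i + 1)]` of length
`2 (k - i)`, and source `i` is placed at the centre of block `i`. -/
def blockStart (k i : ℕ) : ℕ := 2 * ∑ j ∈ range i, (k - j)

theorem blockStart_succ (k i : ℕ) : blockStart k (i + 1) = blockStart k i + 2 * (k - i) := by
  rw [blockStart, sum_range_succ, mul_add, blockStart]

theorem blockStart_mono (k : ℕ) : Monotone (blockStart k) :=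
  monotone_nat_of_le_succ fun i => by rw [blockStart_succ]; omega

theorem blockStart_self (k : ℕ) : blockStart k k = k ^ 2 + k := two_mul_sum_range_sub k

theorem blockStart_add_sub_lt {k : ℕ} (i : Fin k) : blockStart k i + (k - i) < k ^ 2 + k + 1 := by
  have := blockStart_mono k (show i.val + 1 ≤ k by omega)
  rw [blockStart_succ, blockStart_self] at this
  omega

def pathBurningSeq (k : ℕ) (i : Fin k) : Fin (k ^ 2 + k + 1) :=
  ⟨blockStart k i + (k - i), blockStart_add_sub_lt i⟩

theorem isBurningSeq_pathBurningSeq {k : ℕ} (hk : 1 ≤ k) :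
    IsBurningSeq (pathG (k ^ 2 + k + 1)) (pathBurningSeq k) := by
  refine ⟨hk, fun i j hij => ?_, fun v => ?_⟩
  · have := blockStart_mono k (show i.val + 1 ≤ j from hij)
    rw [blockStart_succ] at this
    rw [pathG_edist, Nat.cast_le]
    simp only [pathBurningSeq, Nat.dist]
    omega
  · have hv : v.val ≤ blockStart k (k - 1 + 1) := by
      rw [Nat.sub_add_cancel hk, blockStart_self]; omega
    obtain ⟨i, hi, hvi⟩ := exists_le_le_succ_of_le (Nat.zero_le _) hv
    rw [blockStart_succ] at hvi
    refine ⟨⟨i, by omega⟩, ?_⟩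
    rw [pathG_edist, Nat.cast_le]
    simp only [pathBurningSeq, Nat.dist]
    omega

theorem burnTime_pathBurningSeq_mod_two {k : ℕ} (hk : 1 ≤ k) (v : Fin (k ^ 2 + k + 1)) :
    burnTime (pathG _) (pathBurningSeq k) v % 2 = (k + 1 + v) % 2 := by
  obtain ⟨i, hi⟩ := exists_burnTime_eq (pathBurningSeq k) (pathG_preconnected _) hk v
  have heven : blockStart k i % 2 = 0 := Nat.mul_mod_right 2 _
  rw [hi, pathG_dist]
  simp only [pathBurningSeq, Nat.dist]
  omega

theorem isBurningHom_pathBurningSeq {k : ℕ} (hk : 1 ≤ k) :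
    IsBurningHom (pathG (k ^ 2 + k + 1)) (pathBurningSeq k) := by
  intro v w hvw heq
  have hv := burnTime_pathBurningSeq_mod_two hk v
  have hw := burnTime_pathBurningSeq_mod_two hk w
  rw [heq] at hv
  rcases hvw with h | h <;> omega

/-- Fix `k ≥ 1`. If the path graph `P_n` admits a burning sequence
with exactly `k` sources whose burning is a burning homomorphism, then
`n ≤ k² + k + 1`; moreover `P_{k² + k + 1}` admits such a burning sequence. -/
theorem stmt_10 (k : ℕ) (hk : 1 ≤ k) :
    (∀ n : ℕ, (∃ s : Fin k → Fin n, IsBurningSeq (pathG n) s ∧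
        (∀ v w : Fin n, (pathG n).Adj v w →
          burnTime (pathG n) s v ≠ burnTime (pathG n) s w)) →
      n ≤ k ^ 2 + k + 1) ∧
    (∃ s : Fin k → Fin (k ^ 2 + k + 1), IsBurningSeq (pathG (k ^ 2 + k + 1)) s ∧
        (∀ v w : Fin (k ^ 2 + k + 1), (pathG (k ^ 2 + k + 1)).Adj v w →
          burnTime (pathG (k ^ 2 + k + 1)) s v ≠ burnTime (pathG (k ^ 2 + k + 1)) s w)) :=
  ⟨fun _ ⟨_, hs, hhom⟩ => hs.le_sq_add_add_one_of_isBurningHom hhom,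
    ⟨pathBurningSeq k, isBurningSeq_pathBurningSeq hk, isBurningHom_pathBurningSeq hk⟩⟩
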